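/- Assume a* = Δ = 0 and Re(μ) = 0, where μ = Σ_{j=1}^q b_j − Σ_{i=1}^p a_i + (p−q)/2. Then the derivative of ℌ₀(s) = δ^{−s} ℌ(s) along vertical lines satisfies ℌ₀'(σ + it) = O(1/|t|) as |t| → ∞, uniformly for σ in compact subintervals of (α, β), where α = max_j(−Re(b_j)/β_j) (or −∞ if m = 0) and β = min_i((1 − Re(a_i))/α_i) (or +∞ if n = 0). -/

import Mathlib

open Filter Finset Real

lemma aux_hasDerivAt_log_abs {f : ℝ → ℂ} {f' : ℂ} {t : ℝ} (hf : HasDerivAt f f' t)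
    (h0 : f t ≠ 0) :
    HasDerivAt (fun u => Real.log (‖f u‖)) ((f' / f t).re) t := by
  have hre : HasDerivAt (fun u => (f u).re) f'.re t :=
    (Complex.reCLM.hasFDerivAt.comp_hasDerivAt t hf)
  have him : HasDerivAt (fun u => (f u).im) f'.im t :=
    (Complex.imCLM.hasFDerivAt.comp_hasDerivAt t hf)
  have hsq : HasDerivAt (fun u => (f u).re ^ 2 + (f u).im ^ 2)
      (2 * (f t).re * f'.re + 2 * (f t).im * f'.im) t := by
    have h1 := (hre.pow 2).add (him.pow 2)
    exact h1.congr_deriv (by ring)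
  have hnsq : (f t).re ^ 2 + (f t).im ^ 2 ≠ 0 := by
    have := Complex.normSq_pos.mpr h0
    rw [Complex.normSq_apply] at this
    nlinarith
  have hlog := (Real.hasDerivAt_log hnsq).comp t hsq
  have heq : (fun u => Real.log (‖f u‖))
      = fun u => (1/2) * Real.log ((f u).re ^ 2 + (f u).im ^ 2) := by
    funext u
    have habs : ‖f u‖ = Real.sqrt ((f u).re ^ 2 + (f u).im ^ 2) := by
      rw [Complex.norm_def, Complex.normSq_apply]; ring_nf
    rw [habs, Real.log_sqrt (by positivity)]; ring
  rw [heq]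
  have h2 := hlog.const_mul (1/2 : ℝ)
  refine h2.congr_deriv ?_
  rw [Complex.div_re, Complex.normSq_apply]
  have hnsq' : (f t).re * (f t).re + (f t).im * (f t).im ≠ 0 := by
    intro h; exact hnsq (by nlinarith)
  field_simp

lemma aux_decay {g g' : ℝ → ℝ} {C T : ℝ} (hT : 0 < T) (hC : 0 ≤ C)
    (hd : ∀ t ∈ Set.Ici T, HasDerivAt g (g' t) t)
    (hb : ∀ t ∈ Set.Ici T, g' t ≤ C / t ^ 2) :
    ∀ t ∈ Set.Ici T, g t ≤ g T + C / T := by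
  set φ : ℝ → ℝ := fun t => g t + C / t with hφ
  have hφd : ∀ t ∈ Set.Ici T, HasDerivAt φ (g' t - C / t ^ 2) t := by
    intro t ht
    have htpos : t ≠ 0 := by have := lt_of_lt_of_le hT ht; positivity
    have h1 : HasDerivAt (fun t : ℝ => C / t) (-(C / t ^ 2)) t := by
      simpa [div_eq_mul_inv, mul_comm] using (hasDerivAt_inv htpos).const_mul C
    exact ((hd t ht).add h1).congr_deriv (by ring)
  have hanti : AntitoneOn φ (Set.Ici T) := by
    apply antitoneOn_of_deriv_nonpos (convex_Ici T)
    · exact fun t ht => (hφd t ht).continuousAt.continuousWithinAt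
    · intro t ht
      rw [interior_Ici] at ht
      exact ((hφd t (Set.mem_Ioi.mp ht).le).differentiableAt).differentiableWithinAt
    · intro t ht
      rw [interior_Ici] at ht
      rw [(hφd t (Set.mem_Ioi.mp ht).le).deriv]
      have := hb t (Set.mem_Ioi.mp ht).le
      linarith
  intro t ht
  have h1 : φ t ≤ φ T := hanti (Set.self_mem_Ici) ht ht
  have htpos : 0 < t := lt_of_lt_of_le hT ht
  have : 0 ≤ C / t := by positivity
  simp only [hφ] at h1
  linarith

lemma aux_prod_diff {ι : Type*} (u : Finset ι) (g : ι → ℂ → ℂ) (x : ℂ)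
    (h : ∀ i ∈ u, DifferentiableAt ℂ (g i) x) :
    DifferentiableAt ℂ (fun y => ∏ i ∈ u, g i y) x := by
  classical
  induction u using Finset.induction with
  | empty => simp
  | @insert c v hni ih =>
    simp only [Finset.prod_insert hni]
    exact (h c (Finset.mem_insert_self c v)).mul
      (ih fun i hi => h i (Finset.mem_insert_of_mem hi))

lemma aux_gamma_affine_diff (c k : ℂ) (s : ℂ) (h : ∀ j : ℕ, c + k * s ≠ -j) :
    DifferentiableAt ℂ (fun z => Complex.Gamma (c + k * z)) s :=
  (Complex.differentiableAt_Gamma _ h).comp s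
    ((differentiableAt_const c).add (differentiableAt_id.const_mul k))

lemma aux_gamma_affine_diff' (c k : ℂ) (s : ℂ) (h : ∀ j : ℕ, c - k * s ≠ -j) :
    DifferentiableAt ℂ (fun z => Complex.Gamma (c - k * z)) s :=
  (Complex.differentiableAt_Gamma _ h).comp s
    ((differentiableAt_const c).sub (differentiableAt_id.const_mul k))

lemma aux_ne_neg_nat_of_re_pos (z : ℂ) (hz : 0 < z.re) : ∀ j : ℕ, z ≠ -j := by
  intro j h
  rw [h] at hz
  simp at hz
  have : (0:ℝ) ≤ (j:ℝ) := Nat.cast_nonneg j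
  linarith [hz]

lemma aux_ne_neg_nat_of_gamma_ne (z : ℂ) (hz : Complex.Gamma z ≠ 0) : ∀ j : ℕ, z ≠ -j := by
  intro j h
  exact hz ((Complex.Gamma_eq_zero_iff z).mpr ⟨j, h⟩)

/-- Assume a* = Δ = 0 and Re(μ) = 0. Given the asymptotic expansion of
ℌ'/ℌ (with a₁* = a₂* = 0), the derivative of ℌ₀(s) = δ^{−s} ℌ(s) along
vertical lines satisfies ℌ₀'(σ + it) = O(1/|t|) as |t| → ∞, uniformly for σ
in compact subintervals [σ₁,σ₂] of (α, β), where α = max_j(−Re b_j/β_j),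
β = min_i((1 − Re a_i)/α_i). -/
theorem stmt14 (p q n m : ℕ) (hn : n ≤ p) (hm : m ≤ q)
    (a : Fin p → ℂ) (αe : Fin p → ℝ) (b : Fin q → ℂ) (βe : Fin q → ℝ)
    (hαe : ∀ i, 0 < αe i) (hβe : ∀ j, 0 < βe j)
    -- a* = 0 :
    (hastar : (∑ i ∈ univ.filter (fun i : Fin p => (i : ℕ) < n), αe i)
        - (∑ i ∈ univ.filter (fun i : Fin p => n ≤ (i : ℕ)), αe i)
        + (∑ j ∈ univ.filter (fun j : Fin q => (j : ℕ) < m), βe j)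
        - (∑ j ∈ univ.filter (fun j : Fin q => m ≤ (j : ℕ)), βe j) = 0)
    -- Δ = 0 :
    (hΔ : (∑ j, βe j) - (∑ i, αe i) = 0)
    (μ : ℂ) (hμ : μ = (∑ j, b j) - (∑ i, a i) + ((p : ℂ) - q) / 2)
    (hμre : μ.re = 0)
    (δ0 : ℝ)
    (hδ0 : δ0 = (∏ i, αe i ^ (-(αe i))) * ∏ j, βe j ^ (βe j))
    (Hker : ℂ → ℂ)
    (hHker : Hker = fun s : ℂ =>
      (∏ j ∈ univ.filter (fun j : Fin q => (j : ℕ) < m),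
          Complex.Gamma (b j + (βe j : ℂ) * s)) *
        (∏ i ∈ univ.filter (fun i : Fin p => (i : ℕ) < n),
          Complex.Gamma (1 - a i - (αe i : ℂ) * s)) /
        ((∏ i ∈ univ.filter (fun i : Fin p => n ≤ (i : ℕ)),
          Complex.Gamma (a i + (αe i : ℂ) * s)) *
         (∏ j ∈ univ.filter (fun j : Fin q => m ≤ (j : ℕ)),
          Complex.Gamma (1 - b j - (βe j : ℂ) * s))))
    (H0 : ℂ → ℂ)
    (hH0 : H0 = fun s : ℂ => (δ0 : ℂ) ^ (-s) * Hker s)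
    -- given: ℌ'(σ+it)/ℌ(σ+it) = log δ + (μ + Δσ)/(it) + O(1/t²)
    -- (uniformly on compact subintervals of (α,β)); here a₁* = a₂* = 0, Δ = 0:
    (hratio : ∀ σ₁ σ₂ : ℝ,
      (∀ j : Fin q, (j : ℕ) < m → -((b j).re) / βe j < σ₁) →
      (∀ i : Fin p, (i : ℕ) < n → σ₂ < (1 - (a i).re) / αe i) →
      ∃ C T : ℝ, ∀ σ t : ℝ, σ₁ ≤ σ → σ ≤ σ₂ → T ≤ |t| →
        Hker ((σ : ℂ) + (t : ℂ) * Complex.I) ≠ 0 ∧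
        ‖deriv Hker ((σ : ℂ) + (t : ℂ) * Complex.I) /
            Hker ((σ : ℂ) + (t : ℂ) * Complex.I)
          - ((Real.log δ0 : ℂ) + μ / ((t : ℂ) * Complex.I))‖ ≤ C / t ^ 2) :
    ∀ σ₁ σ₂ : ℝ,
      (∀ j : Fin q, (j : ℕ) < m → -((b j).re) / βe j < σ₁) →
      (∀ i : Fin p, (i : ℕ) < n → σ₂ < (1 - (a i).re) / αe i) →
      ∃ C T : ℝ, ∀ σ t : ℝ, σ₁ ≤ σ → σ ≤ σ₂ → T ≤ |t| →
        ‖deriv H0 ((σ : ℂ) + (t : ℂ) * Complex.I)‖ ≤ C / |t| := by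
  intro σ₁ σ₂ h₁ h₂
  obtain ⟨C₀, T₀, hCT⟩ := hratio σ₁ σ₂ h₁ h₂
  set C : ℝ := max C₀ 0 with hCdef
  set T : ℝ := max T₀ 1 with hTdef
  have hT1 : (1:ℝ) ≤ T := le_max_right _ _
  have hT0 : (0:ℝ) < T := lt_of_lt_of_le one_pos hT1
  have hC0 : (0:ℝ) ≤ C := le_max_right _ _
  have hrat : ∀ σ t : ℝ, σ₁ ≤ σ → σ ≤ σ₂ → T ≤ |t| →
      Hker ((σ : ℂ) + (t : ℂ) * Complex.I) ≠ 0 ∧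
      ‖deriv Hker ((σ : ℂ) + (t : ℂ) * Complex.I) /
          Hker ((σ : ℂ) + (t : ℂ) * Complex.I)
        - ((Real.log δ0 : ℂ) + μ / ((t : ℂ) * Complex.I))‖ ≤ C / t ^ 2 := by
    intro σ t hσ1 hσ2 hTt
    have ht0 : t ≠ 0 := by
      intro h; rw [h] at hTt; simp at hTt; linarith
    have ht2 : (0:ℝ) < t ^ 2 := by positivity
    obtain ⟨hne, hb⟩ := hCT σ t hσ1 hσ2 (le_trans (le_max_left _ _) hTt)
    exact ⟨hne, hb.trans (by gcongr; exact le_max_left _ _)⟩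
  by_cases hσσ : σ₁ ≤ σ₂
  swap
  · exact ⟨0, T, fun σ t hσ1 hσ2 _ => absurd (hσ1.trans hσ2) hσσ⟩
  -- differentiability of Hker on the strip
  have hdiff : ∀ σ t : ℝ, σ₁ ≤ σ → σ ≤ σ₂ → T ≤ |t| →
      DifferentiableAt ℂ Hker ((σ : ℂ) + (t : ℂ) * Complex.I) := by
    intro σ t hσ1 hσ2 hTt
    have hne := (hrat σ t hσ1 hσ2 hTt).1
    set s : ℂ := (σ : ℂ) + (t : ℂ) * Complex.I with hs
    have hsre : s.re = σ := by simp [hs]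
    have hden : ((∏ i ∈ univ.filter (fun i : Fin p => n ≤ (i : ℕ)),
          Complex.Gamma (a i + (αe i : ℂ) * s)) *
        (∏ j ∈ univ.filter (fun j : Fin q => m ≤ (j : ℕ)),
          Complex.Gamma (1 - b j - (βe j : ℂ) * s))) ≠ 0 := by
      intro h
      apply hne
      rw [hHker]
      beta_reduce
      rw [h, div_zero]
    rw [hHker]
    apply DifferentiableAt.div
    · apply DifferentiableAt.mul
      · apply aux_prod_diff
        intro j hj
        have hj' : (j : ℕ) < m := by simpa using hj
        apply aux_gamma_affine_diff
        apply aux_ne_neg_nat_of_re_pos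
        have hb1 := h₁ j hj'
        have hβ := hβe j
        have hre : (b j + (βe j : ℂ) * s).re = (b j).re + βe j * σ := by
          simp [Complex.add_re, Complex.mul_re, hsre, Complex.ofReal_re, Complex.ofReal_im]
        rw [hre]
        rw [div_lt_iff₀ hβ] at hb1
        nlinarith
      · apply aux_prod_diff
        intro i hi
        have hi' : (i : ℕ) < n := by simpa using hi
        apply aux_gamma_affine_diff'
        apply aux_ne_neg_nat_of_re_pos
        have hb2 := h₂ i hi'
        have hα := hαe i
        have hre : (1 - a i - (αe i : ℂ) * s).re = 1 - (a i).re - αe i * σ := by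
          simp [Complex.sub_re, Complex.one_re, Complex.mul_re, hsre,
            Complex.ofReal_re, Complex.ofReal_im]
        rw [hre]
        rw [lt_div_iff₀ hα] at hb2
        nlinarith
    · apply DifferentiableAt.mul
      · apply aux_prod_diff
        intro i hi
        apply aux_gamma_affine_diff
        apply aux_ne_neg_nat_of_gamma_ne
        have h1 : (∏ i ∈ univ.filter (fun i : Fin p => n ≤ (i : ℕ)),
            Complex.Gamma (a i + (αe i : ℂ) * s)) ≠ 0 := fun h => hden (by rw [h, zero_mul])
        exact Finset.prod_ne_zero_iff.mp h1 i hi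
      · apply aux_prod_diff
        intro j hj
        have h2 : (∏ j ∈ univ.filter (fun j : Fin q => m ≤ (j : ℕ)),
            Complex.Gamma (1 - b j - (βe j : ℂ) * s)) ≠ 0 := fun h => hden (by rw [h, mul_zero])
        have := Finset.prod_ne_zero_iff.mp h2 j hj
        exact aux_gamma_affine_diff' _ _ _ (aux_ne_neg_nat_of_gamma_ne _ this)
    · exact hden
  -- boundedness on the two horizontal boundary lines
  have hTT : T ≤ |T| := by rw [abs_of_pos hT0]
  have hTT' : T ≤ |(-T)| := by rw [abs_neg, abs_of_pos hT0]
  have hcont : ∀ t : ℝ, T ≤ |t| → ContinuousOn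
      (fun σ : ℝ => ‖Hker ((σ : ℂ) + (t : ℂ) * Complex.I)‖) (Set.Icc σ₁ σ₂) := by
    intro t ht σ hσ
    apply ContinuousAt.continuousWithinAt
    have hc1 : ContinuousAt (fun x : ℝ => (x : ℂ) + (t : ℂ) * Complex.I) σ :=
      (Complex.continuous_ofReal.add continuous_const).continuousAt
    have hc2 : ContinuousAt (fun x : ℝ => Hker ((x : ℂ) + (t : ℂ) * Complex.I)) σ :=
      ContinuousAt.comp (g := Hker) (f := fun x : ℝ => (x : ℂ) + (t : ℂ) * Complex.I)
        ((hdiff σ t hσ.1 hσ.2 ht).continuousAt) hc1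
    exact ContinuousAt.comp (g := norm)
      (f := fun x : ℝ => Hker ((x : ℂ) + (t : ℂ) * Complex.I))
      continuous_norm.continuousAt hc2
  obtain ⟨M₀, hM₀⟩ := (isCompact_Icc (a := σ₁) (b := σ₂)).exists_bound_of_continuousOn
    (hcont T hTT)
  obtain ⟨M₁, hM₁⟩ := (isCompact_Icc (a := σ₁) (b := σ₂)).exists_bound_of_continuousOn
    (hcont (-T) hTT')
  set M : ℝ := max (max M₀ M₁) 1 with hMdef
  have hM1 : (1:ℝ) ≤ M := le_max_right _ _
  have hMpos : (0:ℝ) < M := lt_of_lt_of_le one_pos hM1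
  have hMa : ∀ σ : ℝ, σ₁ ≤ σ → σ ≤ σ₂ →
      ‖Hker ((σ : ℂ) + (T : ℂ) * Complex.I)‖ ≤ M := by
    intro σ hσ1 hσ2
    have := hM₀ σ ⟨hσ1, hσ2⟩
    rw [Real.norm_eq_abs, abs_of_nonneg (norm_nonneg _)] at this
    exact this.trans ((le_max_left _ _).trans (le_max_left _ _))
  have hMb : ∀ σ : ℝ, σ₁ ≤ σ → σ ≤ σ₂ →
      ‖Hker ((σ : ℂ) + ((-T : ℝ) : ℂ) * Complex.I)‖ ≤ M := by
    intro σ hσ1 hσ2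
    have := hM₁ σ ⟨hσ1, hσ2⟩
    rw [Real.norm_eq_abs, abs_of_nonneg (norm_nonneg _)] at this
    exact this.trans ((le_max_right _ _).trans (le_max_left _ _))
  -- the key strip bound via integration of the logarithmic derivative
  have hstrip : ∀ σ t : ℝ, σ₁ ≤ σ → σ ≤ σ₂ → T ≤ |t| →
      ‖Hker ((σ : ℂ) + (t : ℂ) * Complex.I)‖ ≤ M * Real.exp (C / T) := by
    intro σ t hσ1 hσ2 hTt
    have habs_pos : 0 < ‖Hker ((σ : ℂ) + (t : ℂ) * Complex.I)‖ :=
      norm_pos_iff.mpr (hrat σ t hσ1 hσ2 hTt).1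
    have hlogM : ∀ x : ℂ, ‖Hker x‖ ≤ M → 0 < ‖Hker x‖ →
        Real.log (‖Hker x‖) ≤ Real.log M := fun x h hp => Real.log_le_log hp h
    rcases le_or_gt 0 t with hpos | hneg
    · -- upper half plane
      have ht : T ≤ t := by rwa [abs_of_nonneg hpos] at hTt
      have key : ∀ u ∈ Set.Ici T, HasDerivAt
          (fun u : ℝ => Real.log (‖Hker ((σ : ℂ) + (u : ℂ) * Complex.I)‖))
          ((deriv Hker ((σ : ℂ) + (u : ℂ) * Complex.I) * Complex.I /
            Hker ((σ : ℂ) + (u : ℂ) * Complex.I)).re) u := by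
        intro u hu
        have hu' : T ≤ |u| := by rw [abs_of_nonneg (le_trans hT0.le hu)]; exact hu
        have hinner : HasDerivAt (fun u : ℝ => (σ : ℂ) + (u : ℂ) * Complex.I) Complex.I u := by
          simpa using (HasDerivAt.const_add (σ : ℂ)
            (((hasDerivAt_id u).ofReal_comp).mul_const Complex.I))
        have houter := (hdiff σ u hσ1 hσ2 hu').hasDerivAt
        have hcomp := houter.complexToReal_fderiv.comp_hasDerivAt u hinner
        simp only [Function.comp_def, ContinuousLinearMap.smul_apply,
          ContinuousLinearMap.one_apply, smul_eq_mul] at hcomp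
        have hcomp' : HasDerivAt (fun u : ℝ => Hker ((σ : ℂ) + (u : ℂ) * Complex.I))
            (deriv Hker ((σ : ℂ) + (u : ℂ) * Complex.I) * Complex.I) u := by
          convert hcomp using 1
        exact aux_hasDerivAt_log_abs hcomp' (hrat σ u hσ1 hσ2 hu').1
      have hbnd : ∀ u ∈ Set.Ici T,
          ((deriv Hker ((σ : ℂ) + (u : ℂ) * Complex.I) * Complex.I /
            Hker ((σ : ℂ) + (u : ℂ) * Complex.I)).re) ≤ C / u ^ 2 := by
        intro u hu
        have hu' : T ≤ |u| := by rw [abs_of_nonneg (le_trans hT0.le hu)]; exact hu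
        obtain ⟨hne, hb⟩ := hrat σ u hσ1 hσ2 hu'
        have hu0 : (u : ℂ) ≠ 0 := by
          exact_mod_cast (lt_of_lt_of_le hT0 hu).ne'
        set L := deriv Hker ((σ : ℂ) + (u : ℂ) * Complex.I) /
          Hker ((σ : ℂ) + (u : ℂ) * Complex.I) with hL
        set E := (Real.log δ0 : ℂ) + μ / ((u : ℂ) * Complex.I) with hE
        have h1 : deriv Hker ((σ : ℂ) + (u : ℂ) * Complex.I) * Complex.I /
            Hker ((σ : ℂ) + (u : ℂ) * Complex.I) = Complex.I * L := by
          rw [hL]; ring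
        have hEre : (Complex.I * E).re = 0 := by
          have hEeq : Complex.I * E = (Real.log δ0 : ℂ) * Complex.I + μ / (u : ℂ) := by
            rw [hE]; field_simp
          rw [hEeq]
          simp [Complex.add_re, Complex.mul_re, Complex.div_ofReal_re, hμre]
        have h2 : Complex.I * L = Complex.I * (L - E) + Complex.I * E := by ring
        rw [h1, h2, Complex.add_re, hEre, add_zero]
        calc (Complex.I * (L - E)).re ≤ ‖Complex.I * (L - E)‖ :=
              Complex.re_le_norm _
          _ = ‖L - E‖ := by rw [norm_mul, Complex.norm_I, one_mul]
          _ ≤ C / u ^ 2 := hb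
      have hdec := aux_decay hT0 hC0 key hbnd t ht
      have hMT := hMa σ hσ1 hσ2
      have hposT : 0 < ‖Hker ((σ : ℂ) + (T : ℂ) * Complex.I)‖ :=
        norm_pos_iff.mpr (hrat σ T hσ1 hσ2 hTT).1
      have hlog2 : Real.log (‖Hker ((σ : ℂ) + (t : ℂ) * Complex.I)‖)
          ≤ Real.log M + C / T := by
        have := hlogM _ hMT hposT
        linarith
      calc ‖Hker ((σ : ℂ) + (t : ℂ) * Complex.I)‖
          = Real.exp (Real.log (‖Hker ((σ : ℂ) + (t : ℂ) * Complex.I)‖)) :=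
            (Real.exp_log habs_pos).symm
        _ ≤ Real.exp (Real.log M + C / T) := Real.exp_le_exp.mpr hlog2
        _ = M * Real.exp (C / T) := by rw [Real.exp_add, Real.exp_log hMpos]
    · -- lower half plane
      have ht : T ≤ -t := by rwa [abs_of_neg hneg] at hTt
      have hcast : ∀ u : ℝ, (σ : ℂ) - (u : ℂ) * Complex.I
          = (σ : ℂ) + ((-u : ℝ) : ℂ) * Complex.I := by
        intro u; push_cast; ring
      have key : ∀ u ∈ Set.Ici T, HasDerivAt
          (fun u : ℝ => Real.log (‖Hker ((σ : ℂ) - (u : ℂ) * Complex.I)‖))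
          ((deriv Hker ((σ : ℂ) - (u : ℂ) * Complex.I) * (-Complex.I) /
            Hker ((σ : ℂ) - (u : ℂ) * Complex.I)).re) u := by
        intro u hu
        have hu' : T ≤ |(-u)| := by
          rw [abs_neg, abs_of_nonneg (le_trans hT0.le hu)]; exact hu
        have hinner : HasDerivAt (fun u : ℝ => (σ : ℂ) - (u : ℂ) * Complex.I) (-Complex.I) u := by
          simpa using (HasDerivAt.const_sub (σ : ℂ)
            (((hasDerivAt_id u).ofReal_comp).mul_const Complex.I))
        have hdiffu : DifferentiableAt ℂ Hker ((σ : ℂ) - (u : ℂ) * Complex.I) := by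
          rw [hcast u]; exact hdiff σ (-u) hσ1 hσ2 hu'
        have houter := hdiffu.hasDerivAt
        have hcomp := houter.complexToReal_fderiv.comp_hasDerivAt u hinner
        simp only [Function.comp_def, ContinuousLinearMap.smul_apply,
          ContinuousLinearMap.one_apply, smul_eq_mul] at hcomp
        have hcomp' : HasDerivAt (fun u : ℝ => Hker ((σ : ℂ) - (u : ℂ) * Complex.I))
            (deriv Hker ((σ : ℂ) - (u : ℂ) * Complex.I) * (-Complex.I)) u := by
          convert hcomp using 1
        have hneu : Hker ((σ : ℂ) - (u : ℂ) * Complex.I) ≠ 0 := by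
          rw [hcast u]; exact (hrat σ (-u) hσ1 hσ2 hu').1
        exact aux_hasDerivAt_log_abs hcomp' hneu
      have hbnd : ∀ u ∈ Set.Ici T,
          ((deriv Hker ((σ : ℂ) - (u : ℂ) * Complex.I) * (-Complex.I) /
            Hker ((σ : ℂ) - (u : ℂ) * Complex.I)).re) ≤ C / u ^ 2 := by
        intro u hu
        have hu' : T ≤ |(-u)| := by
          rw [abs_neg, abs_of_nonneg (le_trans hT0.le hu)]; exact hu
        obtain ⟨hne, hb⟩ := hrat σ (-u) hσ1 hσ2 hu'
        rw [← hcast u] at hne hb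
        have hu0 : (u : ℂ) ≠ 0 := by
          exact_mod_cast (lt_of_lt_of_le hT0 hu).ne'
        set L := deriv Hker ((σ : ℂ) - (u : ℂ) * Complex.I) /
          Hker ((σ : ℂ) - (u : ℂ) * Complex.I) with hL
        set E := (Real.log δ0 : ℂ) + μ / (((-u : ℝ) : ℂ) * Complex.I) with hE
        have h1 : deriv Hker ((σ : ℂ) - (u : ℂ) * Complex.I) * (-Complex.I) /
            Hker ((σ : ℂ) - (u : ℂ) * Complex.I) = (-Complex.I) * L := by
          rw [hL]; ring
        have hEre : ((-Complex.I) * E).re = 0 := by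
          have hEeq : (-Complex.I) * E = -((Real.log δ0 : ℂ) * Complex.I) + μ / (u : ℂ) := by
            rw [hE]; push_cast; field_simp; ring
          rw [hEeq]
          simp [Complex.add_re, Complex.neg_re, Complex.mul_re, Complex.div_ofReal_re, hμre]
        have h2 : (-Complex.I) * L = (-Complex.I) * (L - E) + (-Complex.I) * E := by ring
        rw [h1, h2, Complex.add_re, hEre, add_zero]
        have hb' : ‖L - E‖ ≤ C / u ^ 2 := by
          have : C / (-u) ^ 2 = C / u ^ 2 := by ring_nf
          rw [← this]; exact hb
        calc ((-Complex.I) * (L - E)).re ≤ ‖(-Complex.I) * (L - E)‖ :=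
              Complex.re_le_norm _
          _ = ‖L - E‖ := by rw [norm_mul, norm_neg, Complex.norm_I, one_mul]
          _ ≤ C / u ^ 2 := hb'
      have hdec := aux_decay hT0 hC0 key hbnd (-t) (by exact ht)
      have hMT := hMb σ hσ1 hσ2
      rw [← hcast T] at hMT
      have hposT : 0 < ‖Hker ((σ : ℂ) - (T : ℂ) * Complex.I)‖ := by
        rw [hcast T]; exact norm_pos_iff.mpr (hrat σ (-T) hσ1 hσ2 hTT').1
      have heqpt : (σ : ℂ) - ((-t : ℝ) : ℂ) * Complex.I = (σ : ℂ) + (t : ℂ) * Complex.I := by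
        push_cast; ring
      rw [heqpt] at hdec
      have hlog2 : Real.log (‖Hker ((σ : ℂ) + (t : ℂ) * Complex.I)‖)
          ≤ Real.log M + C / T := by
        have := hlogM _ hMT hposT
        linarith
      calc ‖Hker ((σ : ℂ) + (t : ℂ) * Complex.I)‖
          = Real.exp (Real.log (‖Hker ((σ : ℂ) + (t : ℂ) * Complex.I)‖)) :=
            (Real.exp_log habs_pos).symm
        _ ≤ Real.exp (Real.log M + C / T) := Real.exp_le_exp.mpr hlog2
        _ = M * Real.exp (C / T) := by rw [Real.exp_add, Real.exp_log hMpos]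
  -- final assembly
  have hδpos : 0 < δ0 := by
    rw [hδ0]
    apply mul_pos <;> apply Finset.prod_pos <;> intro i _
    · exact Real.rpow_pos_of_pos (hαe i) _
    · exact Real.rpow_pos_of_pos (hβe i) _
  have hδC : (δ0 : ℂ) ≠ 0 := by exact_mod_cast hδpos.ne'
  refine ⟨Real.exp ((|σ₁| + |σ₂|) * |Real.log δ0|) * (M * Real.exp (C / T))
    * (C / T + ‖μ‖), T, ?_⟩
  intro σ t hσ1 hσ2 hTt
  set s : ℂ := (σ : ℂ) + (t : ℂ) * Complex.I with hs
  have hne := (hrat σ t hσ1 hσ2 hTt).1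
  have hd := (hdiff σ t hσ1 hσ2 hTt).hasDerivAt
  have hcpow : HasDerivAt (fun z : ℂ => (δ0 : ℂ) ^ (-z))
      ((δ0 : ℂ) ^ (-s) * Complex.log (δ0 : ℂ) * (-1)) s :=
    (hasDerivAt_neg s).const_cpow (Or.inl hδC)
  have hH0d : HasDerivAt H0
      ((δ0 : ℂ) ^ (-s) * Complex.log (δ0 : ℂ) * (-1) * Hker s
        + (δ0 : ℂ) ^ (-s) * deriv Hker s) s := by
    rw [hH0]; exact hcpow.mul hd
  have hlogδ : Complex.log (δ0 : ℂ) = (Real.log δ0 : ℂ) :=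
    (Complex.ofReal_log hδpos.le).symm
  have hderiv : deriv H0 s = (δ0 : ℂ) ^ (-s) * Hker s
      * (deriv Hker s / Hker s - (Real.log δ0 : ℂ)) := by
    rw [hH0d.deriv, hlogδ]
    linear_combination (-(δ0 : ℂ) ^ (-s) * deriv Hker s) * mul_inv_cancel₀ (hne : Hker s ≠ 0)
  rw [hderiv, norm_mul, norm_mul]
  have htT : 0 < |t| := lt_of_lt_of_le hT0 hTt
  have ht0 : t ≠ 0 := by intro h; rw [h] at htT; simp at htT
  have h1 : ‖(δ0 : ℂ) ^ (-s)‖ ≤ Real.exp ((|σ₁| + |σ₂|) * |Real.log δ0|) := by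
    rw [Complex.norm_cpow_eq_rpow_re_of_pos hδpos]
    have hres : (-s).re = -σ := by simp [hs]
    rw [hres, Real.rpow_def_of_pos hδpos]
    apply Real.exp_le_exp.mpr
    have hσabs : |σ| ≤ |σ₁| + |σ₂| :=
      (abs_le_max_abs_abs hσ1 hσ2).trans (max_le (le_add_of_nonneg_right (abs_nonneg _))
        (le_add_of_nonneg_left (abs_nonneg _)))
    calc Real.log δ0 * (-σ) ≤ |Real.log δ0 * (-σ)| := le_abs_self _
      _ = |Real.log δ0| * |σ| := by rw [abs_mul, abs_neg]
      _ ≤ |Real.log δ0| * (|σ₁| + |σ₂|) := by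
          apply mul_le_mul_of_nonneg_left hσabs (abs_nonneg _)
      _ = (|σ₁| + |σ₂|) * |Real.log δ0| := by ring
  have h2 : ‖Hker s‖ ≤ M * Real.exp (C / T) := hstrip σ t hσ1 hσ2 hTt
  have h3 : ‖deriv Hker s / Hker s - (Real.log δ0 : ℂ)‖
      ≤ (C / T + ‖μ‖) / |t| := by
    have hb := (hrat σ t hσ1 hσ2 hTt).2
    have habsμ : ‖μ / ((t : ℂ) * Complex.I)‖ = ‖μ‖ / |t| := by
      rw [norm_div, norm_mul, Complex.norm_I, Complex.norm_real, Real.norm_eq_abs, mul_one]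
    have hsplit : deriv Hker s / Hker s - (Real.log δ0 : ℂ)
        = (deriv Hker s / Hker s - ((Real.log δ0 : ℂ) + μ / ((t : ℂ) * Complex.I)))
          + μ / ((t : ℂ) * Complex.I) := by ring
    calc ‖deriv Hker s / Hker s - (Real.log δ0 : ℂ)‖
        ≤ ‖deriv Hker s / Hker s
            - ((Real.log δ0 : ℂ) + μ / ((t : ℂ) * Complex.I))‖
          + ‖μ / ((t : ℂ) * Complex.I)‖ := by
          rw [hsplit]; exact norm_add_le _ _
      _ ≤ C / t ^ 2 + ‖μ‖ / |t| := by rw [habsμ]; exact add_le_add_left hb _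
      _ ≤ (C / T) / |t| + ‖μ‖ / |t| := by
          have heq2 : C / t ^ 2 = (C / |t|) / |t| := by
            rw [div_div, abs_mul_abs_self, sq]
          rw [heq2]
          gcongr
      _ = (C / T + ‖μ‖) / |t| := by rw [add_div]
  calc ‖(δ0 : ℂ) ^ (-s)‖ * ‖Hker s‖
        * ‖deriv Hker s / Hker s - (Real.log δ0 : ℂ)‖
      ≤ Real.exp ((|σ₁| + |σ₂|) * |Real.log δ0|) * (M * Real.exp (C / T))
        * ((C / T + ‖μ‖) / |t|) := by
        apply mul_le_mul (mul_le_mul h1 h2 (norm_nonneg _) (Real.exp_pos _).le)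
          h3 (norm_nonneg _)
        positivity
    _ = Real.exp ((|σ₁| + |σ₂|) * |Real.log δ0|) * (M * Real.exp (C / T))
        * (C / T + ‖μ‖) / |t| := by ring
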